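/- Let γ, δ, τ be nonzero ordinals with δ and τ of uncountable cofinality, and Σ = ⟨S_β : β < τ⟩ a partition of δ*. If A ∈ I^{Σ,γ} is nonempty and has a maximum element x, then A ∩ L^{δ,γ}_x ∈ I^{Σ,γ}_x (equivalently, A ∖ {x} ∈ I^{Σ,γ}). In particular, the only basic sets of I^{Σ,γ} that have a maximum element are the singletons. -/

import Mathlib

open Ordinal Cardinal

abbrev SOrd : Type 1 := Ordinalᵒᵈ ⊕ₗ Ordinal

namespace SOrd
def neg (α : Ordinal) : SOrd := toLex (Sum.inl (OrderDual.toDual α))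
def pos (α : Ordinal) : SOrd := toLex (Sum.inr α)
def IsPos (a : SOrd) : Prop := ∃ α : Ordinal, a = pos α
def val (a : SOrd) : Ordinal := Sum.elim (fun b => OrderDual.ofDual b) id (ofLex a)
end SOrd

def IsBetween (δ : Ordinal) (a : SOrd) : Prop := SOrd.neg δ < a ∧ a < SOrd.pos δ

def Lset (δ γ : Ordinal) : Set (List SOrd) :=
  {x | x ≠ [] ∧ (∃ h : 0 < x.length, ∃ α < γ, x[0]'h = SOrd.pos α) ∧
    ∀ k, ∀ h : k < x.length, 0 < k → IsBetween δ (x[k]'h)}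

def Llt (x y : List SOrd) : Prop :=
  (∃ k, ∃ hx : k < x.length, ∃ hy : k < y.length,
      x.take k = y.take k ∧ x[k]'hx < y[k]'hy) ∨
  (∃ hy : x.length < y.length, y.take x.length = x ∧ SOrd.IsPos (y[x.length]'hy)) ∨
  (∃ hx : y.length < x.length, x.take y.length = y ∧ ¬ SOrd.IsPos (x[y.length]'hx))

/-- `S` (as the indexed family `⟨S β : β < τ⟩`, where each `ξ ∈ S β` codes the
negative ordinal `ξ*`) is a partition of `δ*`. -/
def IsPartition (δ τ : Ordinal) (S : Ordinal → Set Ordinal) : Prop :=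
  (∀ β, S β ⊆ Set.Iio δ) ∧ (∀ β, τ ≤ β → S β = ∅) ∧ (∀ ξ, ξ < δ → ∃! β, ξ ∈ S β)

/-- `β^Σ(ξ*)`: the index of the piece of the partition containing `ξ*`. -/
noncomputable def colorOf (S : Ordinal → Set Ordinal) (ξ : Ordinal) : Ordinal :=
  sInf {β | ξ ∈ S β}

/-- The index set `r_x`. -/
def rIdx (τ : Ordinal) (x : List SOrd) : Set ℕ :=
  {i | ∃ h : i < x.length, 2 ≤ i ∧ i % 2 = 0 ∧ x[i]'h < SOrd.pos τ}

/-- `Σ`-relevant sequences. -/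
def Relevant (δ γ τ : Ordinal) (S : Ordinal → Set Ordinal) (x : List SOrd) : Prop :=
  x ∈ Lset δ γ ∧ 3 ≤ x.length ∧ x.length % 2 = 1 ∧
  (∀ i, ∀ h : i < x.length, (SOrd.IsPos (x[i]'h) ↔ i % 2 = 0)) ∧
  (∀ i ∈ rIdx τ x, ∀ j ∈ rIdx τ x, i < j →
    ∀ (hi : i - 1 < x.length) (hj : j - 1 < x.length),
      colorOf S (x[j-1]'hj).val < colorOf S (x[i-1]'hi).val) ∧
  x.length - 1 ∈ rIdx τ x

/-- `J^{Σ,γ}_x = {z ∈ L^{δ,γ} : x↾(|x|-1) ≤ z < x}`. -/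
def Jset (δ γ : Ordinal) (x : List SOrd) : Set (List SOrd) :=
  {z ∈ Lset δ γ | (z = x.take (x.length - 1) ∨ Llt (x.take (x.length - 1)) z) ∧ Llt z x}

/-- The initial segment `L^{δ,γ}_α = {z : z < ⟨α⟩}` (equal to `L^{δ,γ}` when `α = γ`). -/
def Lbelow (δ γ α : Ordinal) : Set (List SOrd) :=
  {z ∈ Lset δ γ | Llt z [SOrd.pos α]}

/-- `L^{δ,γ}_x = {z ∈ L^{δ,γ} : z < x}`. -/
def Lx (δ γ : Ordinal) (x : List SOrd) : Set (List SOrd) :=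
  {z ∈ Lset δ γ | Llt z x}

/-- The basic sets of `I^{Σ,γ}`. -/
def IsBasic (δ γ τ : Ordinal) (S : Ordinal → Set Ordinal) (B : Set (List SOrd)) : Prop :=
  (∃ α ≤ γ, B = Lbelow δ γ α) ∨
  (∃ x, Relevant δ γ τ S x ∧ B = Jset δ γ x) ∨
  (∃ z ∈ Lset δ γ, B = ({z} : Set (List SOrd)))

/-- `I^{Σ,γ}`: finite unions of basic sets. -/
def Ifam (δ γ τ : Ordinal) (S : Ordinal → Set Ordinal) : Set (Set (List SOrd)) :=
  {A | ∃ E : Finset (Set (List SOrd)), (∀ B ∈ E, IsBasic δ γ τ S B) ∧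
    A = ⋃ B ∈ E, (B : Set (List SOrd))}

/-- `I^{Σ,γ}_x = {A ⊆ L^{δ,γ}_x : A ∈ I^{Σ,γ}}`. -/
def Ix (δ γ τ : Ordinal) (S : Ordinal → Set Ordinal) (x : List SOrd) : Set (Set (List SOrd)) :=
  {A | A ⊆ Lx δ γ x ∧ A ∈ Ifam δ γ τ S}

/-!
Every element `z` of an initial segment `L^{δ,γ}_α` or of a set `J^{Σ,γ}_x` has a larger
element in the same set: `z⌢⟨0⟩`, or `x⌢⟨0*⟩` when `x` extends `z` by a positive entry.
So the only basic sets with a maximum are singletons, and if `x` is the maximum of `A = ⋃ E`,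
discarding the members of `E` that contain `x` (all equal to `{x}`) leaves a representation
of `A ∖ {x} = A ∩ L^{δ,γ}_x`.
-/

open SOrd

lemma List.getElem_eq_of_take_eq {α : Type*} {x y : List α} {m k : ℕ}
    (h : x.take m = y.take m) (hk : k < m) (hx : k < x.length) (hy : k < y.length) :
    x[k] = y[k] := by
  have h' := List.getElem_of_eq h (i := k) (by simp; omega)
  rwa [List.getElem_take, List.getElem_take] at h'

lemma List.getElem_eq_of_take_length_eq {α : Type*} {x y : List α}
    (h : y.take x.length = x) {k : ℕ} (hx : k < x.length) (hy : k < y.length) :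
    x[k] = y[k] :=
  (List.prefix_iff_eq_take.mpr h.symm).getElem hx

lemma List.take_eq_take_of_take_length_eq {α : Type*} {x w : List α}
    (h : w.take x.length = x) {k : ℕ} (hk : k ≤ x.length) : w.take k = x.take k := by
  rw [← h, List.take_take, min_eq_left hk]

namespace SOrd

lemma not_isPos_neg (a : Ordinal) : ¬ (neg a).IsPos := by
  rintro ⟨α, h⟩
  exact Sum.inl_ne_inr (congrArg ofLex h)

lemma isPos_pos (a : Ordinal) : (pos a).IsPos := ⟨a, rfl⟩

lemma lt_of_not_isPos_of_isPos {a b : SOrd} (ha : ¬ a.IsPos) (hb : b.IsPos) : a < b := by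
  obtain ⟨β, rfl⟩ := hb
  rcases a with c | c
  · exact Sum.Lex.inl_lt_inr _ _
  · exact absurd ⟨c, rfl⟩ ha

end SOrd

lemma isBetween_pos_zero {δ : Ordinal} (hδ : δ ≠ 0) : IsBetween δ (pos 0) :=
  ⟨Sum.Lex.inl_lt_inr _ _, Sum.Lex.inr_lt_inr_iff.mpr (pos_iff_ne_zero.mpr hδ)⟩

lemma isBetween_neg_zero {δ : Ordinal} (hδ : δ ≠ 0) : IsBetween δ (neg 0) :=
  ⟨Sum.Lex.inl_lt_inl_iff.mpr (pos_iff_ne_zero.mpr hδ), Sum.Lex.inl_lt_inr _ _⟩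

lemma append_mem_Lset {δ γ : Ordinal} {z : List SOrd} (hz : z ∈ Lset δ γ) {c : SOrd}
    (hc : IsBetween δ c) : z ++ [c] ∈ Lset δ γ := by
  obtain ⟨hne, ⟨hz0, α, hα, hzα⟩, hall⟩ := hz
  refine ⟨by simp, ⟨by simp, α, hα, by rwa [List.getElem_append_left hz0]⟩, ?_⟩
  intro k hk hk0
  rcases Nat.lt_or_ge k z.length with hkz | hkz
  · rw [List.getElem_append_left hkz]
    exact hall k hkz hk0
  · obtain rfl : k = z.length := by simp at hk; omega
    simpa using hc

/-- The second clause of `Llt x w`. -/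
def PosExt (x w : List SOrd) : Prop :=
  ∃ h : x.length < w.length, w.take x.length = x ∧ (w[x.length]'h).IsPos

lemma Llt_of_posExt {x w : List SOrd} (h : PosExt x w) : Llt x w := Or.inr (Or.inl h)

lemma posExt_append_pos (x : List SOrd) (c : Ordinal) : PosExt x (x ++ [pos c]) :=
  ⟨by simp, List.take_left, by simpa using isPos_pos c⟩

lemma PosExt.append {x w : List SOrd} (h : PosExt x w) (c : SOrd) : PosExt x (w ++ [c]) := by
  obtain ⟨hlen, htake, hpos⟩ := h
  exact ⟨by simp; omega, by rwa [List.take_append_of_le_length hlen.le],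
    by rwa [List.getElem_append_left hlen]⟩

lemma Llt_append_neg_self (x : List SOrd) (c : Ordinal) : Llt (x ++ [neg c]) x :=
  Or.inr (Or.inr ⟨by simp, List.take_left, by simpa using not_isPos_neg c⟩)

lemma Llt_asymm {x y : List SOrd} (hxy : Llt x y) : ¬ Llt y x := by
  intro hyx
  obtain ⟨k, hxk, hyk, ht, hl⟩ | ⟨hl, ht, hp⟩ | ⟨hl, ht, hp⟩ := hxy <;>
    obtain ⟨k', hyk', hxk', ht', hl'⟩ | ⟨hl', ht', hp'⟩ | ⟨hl', ht', hp'⟩ := hyx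
  · rcases lt_trichotomy k k' with hkk | rfl | hkk
    · exact hl.ne (List.getElem_eq_of_take_eq ht'.symm hkk hxk hyk)
    · exact lt_asymm hl hl'
    · exact hl'.ne (List.getElem_eq_of_take_eq ht.symm hkk hyk' hxk')
  · exact hl.ne (List.getElem_eq_of_take_length_eq ht' hyk hxk).symm
  · exact hl.ne (List.getElem_eq_of_take_length_eq ht' hxk hyk)
  · exact hl'.ne (List.getElem_eq_of_take_length_eq ht hxk' hyk').symm
  · omega
  · exact hp' hp
  · exact hl'.ne (List.getElem_eq_of_take_length_eq ht hyk' hxk')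
  · exact hp hp'
  · omega

lemma Llt_irrefl (x : List SOrd) : ¬ Llt x x := fun h => Llt_asymm h h

lemma Llt_of_le_of_posExt {p x w : List SOrd} (hpx : x = p ∨ Llt p x) (hxw : PosExt x w) :
    Llt p w := by
  obtain ⟨hlen, hw, hpos⟩ := hxw
  obtain rfl | hpx := hpx
  · exact Llt_of_posExt ⟨hlen, hw, hpos⟩
  obtain ⟨k, hpk, hxk, ht, hl⟩ | ⟨hl, ht, hp⟩ | ⟨hl, ht, hp⟩ := hpx
  · refine Or.inl ⟨k, hpk, by omega, ?_, ?_⟩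
    · rw [ht, List.take_eq_take_of_take_length_eq hw hxk.le]
    · rwa [← List.getElem_eq_of_take_length_eq hw hxk]
  · refine Or.inr (Or.inl ⟨by omega, ?_, ?_⟩)
    · rwa [List.take_eq_take_of_take_length_eq hw hl.le]
    · rwa [← List.getElem_eq_of_take_length_eq hw hl]
  · exact Or.inl ⟨x.length, hl, hlen, ht.trans hw.symm, lt_of_not_isPos_of_isPos hp hpos⟩

lemma Llt_append_left {x y : List SOrd} (hxy : Llt x y) (hext : ¬ PosExt x y) (c : SOrd) :
    Llt (x ++ [c]) y := by
  obtain ⟨k, hxk, hyk, ht, hl⟩ | hB | ⟨hl, ht, hp⟩ := hxy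
  · refine Or.inl ⟨k, by simp; omega, hyk, ?_, ?_⟩
    · rwa [List.take_append_of_le_length hxk.le]
    · rwa [List.getElem_append_left hxk]
  · exact absurd hB hext
  · refine Or.inr (Or.inr ⟨by simp; omega, ?_, ?_⟩)
    · rwa [List.take_append_of_le_length hl.le]
    · rwa [List.getElem_append_left hl]

section Basic

variable {δ γ τ : Ordinal} {S : Ordinal → Set Ordinal}

lemma exists_Llt_of_mem_Lbelow (hδ : δ ≠ 0) {α : Ordinal} {x : List SOrd}
    (hx : x ∈ Lbelow δ γ α) : ∃ w ∈ Lbelow δ γ α, Llt x w := by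
  obtain ⟨hxL, hlt⟩ := hx
  have hext : ¬ PosExt x [pos α] := by
    rintro ⟨hlen, -⟩
    have hx_pos := List.length_pos_iff.mpr hxL.1
    simp only [List.length_singleton] at hlen
    omega
  exact ⟨x ++ [pos 0],
    ⟨append_mem_Lset hxL (isBetween_pos_zero hδ), Llt_append_left hlt hext _⟩,
    Llt_of_posExt (posExt_append_pos x 0)⟩

lemma exists_Llt_of_mem_Jset (hδ : δ ≠ 0) {x₀ : List SOrd} (hx₀ : x₀ ∈ Lset δ γ)
    {x : List SOrd} (hx : x ∈ Jset δ γ x₀) : ∃ w ∈ Jset δ γ x₀, Llt x w := by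
  obtain ⟨hxL, hge, hlt⟩ := hx
  by_cases hext : PosExt x x₀
  · exact ⟨x₀ ++ [neg 0], ⟨append_mem_Lset hx₀ (isBetween_neg_zero hδ),
      Or.inr (Llt_of_le_of_posExt hge (hext.append _)), Llt_append_neg_self x₀ 0⟩,
      Llt_of_posExt (hext.append _)⟩
  · exact ⟨x ++ [pos 0], ⟨append_mem_Lset hxL (isBetween_pos_zero hδ),
      Or.inr (Llt_of_le_of_posExt hge (posExt_append_pos x 0)), Llt_append_left hlt hext _⟩,
      Llt_of_posExt (posExt_append_pos x 0)⟩

lemma IsBasic.subset_Lset {B : Set (List SOrd)} (hB : IsBasic δ γ τ S B) : B ⊆ Lset δ γ := by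
  obtain ⟨α, -, rfl⟩ | ⟨x, -, rfl⟩ | ⟨z, hz, rfl⟩ := hB
  · exact fun _ hy => hy.1
  · exact fun _ hy => hy.1
  · exact Set.singleton_subset_iff.mpr hz

lemma IsBasic.eq_singleton_of_max (hδ : δ ≠ 0) {B : Set (List SOrd)} (hB : IsBasic δ γ τ S B)
    {x : List SOrd} (hxB : x ∈ B) (hmax : ∀ y ∈ B, y = x ∨ Llt y x) : B = {x} := by
  suffices h : ∀ w ∈ B, ¬ Llt x w by
    obtain ⟨α, -, rfl⟩ | ⟨x₀, hrel, rfl⟩ | ⟨z, -, rfl⟩ := hB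
    · obtain ⟨w, hw, hxw⟩ := exists_Llt_of_mem_Lbelow hδ hxB
      exact absurd hxw (h w hw)
    · obtain ⟨w, hw, hxw⟩ := exists_Llt_of_mem_Jset hδ hrel.1 hxB
      exact absurd hxw (h w hw)
    · rw [Set.eq_of_mem_singleton hxB]
  intro w hw hxw
  rcases hmax w hw with rfl | hwx
  · exact Llt_irrefl w hxw
  · exact Llt_asymm hxw hwx

lemma diff_singleton_mem_Ifam_of_max (hδ : δ ≠ 0) {A : Set (List SOrd)}
    (hA : A ∈ Ifam δ γ τ S) {x : List SOrd} (hmax : ∀ y ∈ A, y = x ∨ Llt y x) :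
    A \ {x} ∈ Ifam δ γ τ S := by
  classical
  obtain ⟨E, hE, rfl⟩ := hA
  refine ⟨E.filter (x ∉ ·), fun B hB => hE B (Finset.mem_filter.mp hB).1, ?_⟩
  ext y
  simp only [Set.mem_sdiff, Set.mem_iUnion, Finset.mem_filter, Set.mem_singleton_iff,
    exists_prop]
  constructor
  · rintro ⟨⟨B, hB, hyB⟩, hyx⟩
    refine ⟨B, ⟨hB, fun hxB => hyx ?_⟩, hyB⟩
    have hBx := (hE B hB).eq_singleton_of_max hδ hxB
      fun u hu => hmax u (Set.mem_biUnion hB hu)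
    rwa [hBx] at hyB
  · rintro ⟨B, ⟨hB, hxB⟩, hyB⟩
    exact ⟨⟨B, hB, hyB⟩, fun h => hxB (h ▸ hyB)⟩

lemma subset_Lset_of_mem_Ifam {A : Set (List SOrd)} (hA : A ∈ Ifam δ γ τ S) :
    A ⊆ Lset δ γ := by
  obtain ⟨E, hE, rfl⟩ := hA
  exact Set.iUnion₂_subset fun B hB => (hE B hB).subset_Lset

lemma inter_Lx_eq_diff_singleton {A : Set (List SOrd)} (hA : A ⊆ Lset δ γ) {x : List SOrd}
    (hmax : ∀ y ∈ A, y = x ∨ Llt y x) : A ∩ Lx δ γ x = A \ {x} := by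
  ext y
  refine ⟨fun ⟨hyA, _, hyx⟩ => ⟨hyA, ?_⟩, fun ⟨hyA, hyx⟩ => ⟨hyA, hA hyA, ?_⟩⟩
  · rintro rfl
    exact Llt_irrefl y hyx
  · exact (hmax y hyA).resolve_left hyx

end Basic

theorem Ifam_remove_max_general (δ γ τ : Ordinal) (hδ : δ ≠ 0)
    (S : Ordinal → Set Ordinal) :
    (∀ A ∈ Ifam δ γ τ S, ∀ x, x ∈ A → (∀ y ∈ A, y = x ∨ Llt y x) →
        A ∩ Lx δ γ x ∈ Ix δ γ τ S x ∧ A \ {x} ∈ Ifam δ γ τ S) ∧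
    (∀ B, IsBasic δ γ τ S B → (∃ x ∈ B, ∀ y ∈ B, y = x ∨ Llt y x) →
        ∃ z, B = ({z} : Set (List SOrd))) := by
  refine ⟨fun A hA x _ hmax => ?_,
    fun B hB ⟨x, hxB, hmax⟩ => ⟨x, hB.eq_singleton_of_max hδ hxB hmax⟩⟩
  have hdiff := diff_singleton_mem_Ifam_of_max hδ hA hmax
  rw [← inter_Lx_eq_diff_singleton (subset_Lset_of_mem_Ifam hA) hmax] at hdiff ⊢
  exact ⟨⟨Set.inter_subset_right, hdiff⟩, hdiff⟩

/-- If `A ∈ I^{Σ,γ}` is nonempty with maximum element `x`, then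
`A ∩ L^{δ,γ}_x ∈ I^{Σ,γ}_x` (equivalently, `A ∖ {x} ∈ I^{Σ,γ}`). In particular,
the only basic sets with a maximum element are the singletons. -/
theorem Ifam_remove_max (δ γ τ : Ordinal) (hδ : δ ≠ 0) (hγ : γ ≠ 0) (hτ : τ ≠ 0)
    (hδcof : Cardinal.aleph0 < δ.cof) (hτcof : Cardinal.aleph0 < τ.cof)
    (S : Ordinal → Set Ordinal) (hS : IsPartition δ τ S) :
    (∀ A ∈ Ifam δ γ τ S, ∀ x, x ∈ A → (∀ y ∈ A, y = x ∨ Llt y x) →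
        A ∩ Lx δ γ x ∈ Ix δ γ τ S x ∧ A \ {x} ∈ Ifam δ γ τ S) ∧
    (∀ B, IsBasic δ γ τ S B → (∃ x ∈ B, ∀ y ∈ B, y = x ∨ Llt y x) →
        ∃ z, B = ({z} : Set (List SOrd))) :=
  Ifam_remove_max_general δ γ τ hδ S
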